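/- Let A be an n×n real matrix with all entries positive and let x ∈ ℝ^n have all entries positive. If x is not a Perron vector of A, then max_{1≤i≤n} (A²x)_i/(Ax)_i < max_{1≤i≤n} (Ax)_i/x_i and min_{1≤i≤n} (Ax)_i/x_i < min_{1≤i≤n} (A²x)_i/(Ax)_i. -/

import Mathlib

open Matrix

/-- The Perron value (spectral radius) of a real square matrix: the supremum of the
absolute values of its complex eigenvalues (roots of the characteristic polynomial). -/
noncomputable def perronValue {n : ℕ} (A : Matrix (Fin n) (Fin n) ℝ) : ℝ :=
  sSup {r : ℝ | ∃ μ : ℂ, ((A.map Complex.ofReal).charpoly).IsRoot μ ∧ r = ‖μ‖}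

/-- A Perron vector of `A`: an eigenvector associated with the Perron value of `A`. -/
def IsPerronVector {n : ℕ} (A : Matrix (Fin n) (Fin n) ℝ) (x : Fin n → ℝ) : Prop :=
  x ≠ 0 ∧ A.mulVec x = perronValue A • x

/-! A positive eigenvector of a nonnegative matrix belongs to its spectral radius (compare an
arbitrary eigenvector `v` with `x` at an index maximising `|vᵢ|/xᵢ`), so `Ax ≠ rx` for every `r`.
With `r = maxᵢ (Ax)ᵢ/xᵢ` this gives `Ax ≤ rx` and `Ax ≠ rx`, and as `A` is positive every entry
of `A(Ax) ≤ r Ax` is strict: every ratio `(A²x)ᵢ/(Ax)ᵢ` is `< r`. Dually for the minimum. -/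

namespace Matrix

variable {ι : Type*} [Fintype ι]

theorem isRoot_charpoly_iff_exists_mulVec_eq_smul [DecidableEq ι] {K : Type*} [Field K]
    (M : Matrix ι ι K) (μ : K) : M.charpoly.IsRoot μ ↔ ∃ v ≠ 0, M *ᵥ v = μ • v := by
  rw [← mem_spectrum_iff_isRoot_charpoly, ← spectrum_toLin',
    ← Module.End.hasEigenvalue_iff_mem_spectrum]
  constructor
  · intro h
    obtain ⟨v, hv⟩ := h.exists_hasEigenvector
    exact ⟨v, hv.2, by simpa using Module.End.mem_eigenspace_iff.mp hv.1⟩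
  · rintro ⟨v, hv, hMv⟩
    exact Module.End.hasEigenvalue_of_hasEigenvector
      ⟨Module.End.mem_eigenspace_iff.mpr (by simpa using hMv), hv⟩

theorem norm_eigenvalue_le_of_mulVec_le_smul {A : Matrix ι ι ℝ} (hA : ∀ i j, 0 ≤ A i j)
    {x : ι → ℝ} (hx : ∀ i, 0 < x i) {l : ℝ} (hAx : A *ᵥ x ≤ l • x) {μ : ℂ} {v : ι → ℂ}
    (hv : v ≠ 0) (hAv : A.map Complex.ofReal *ᵥ v = μ • v) : ‖μ‖ ≤ l := by
  obtain ⟨j, hj⟩ := Function.ne_iff.mp hv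
  obtain ⟨i, -, hi⟩ := Finset.exists_max_image Finset.univ (fun i ↦ ‖v i‖ / x i)
    ⟨j, Finset.mem_univ j⟩
  set c := ‖v i‖ / x i
  have hci : c * x i = ‖v i‖ := div_mul_cancel₀ _ (hx i).ne'
  have hbound : ∀ k, ‖v k‖ ≤ c * x k := fun k ↦
    (div_le_iff₀ (hx k)).mp (hi k (Finset.mem_univ k))
  have hvi : 0 < ‖v i‖ := by
    have : 0 < ‖v j‖ / x j := div_pos (norm_pos_iff.mpr hj) (hx j)
    exact (div_pos_iff_of_pos_right (hx i)).mp (this.trans_le (hi j (Finset.mem_univ j)))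
  have key : ‖μ‖ * ‖v i‖ ≤ l * ‖v i‖ :=
    calc ‖μ‖ * ‖v i‖ = ‖∑ k, (A i k : ℂ) * v k‖ := by
          rw [← norm_mul, ← smul_eq_mul, ← Pi.smul_apply, ← hAv]; rfl
      _ ≤ ∑ k, A i k * ‖v k‖ := by
          refine (norm_sum_le _ _).trans (Finset.sum_le_sum fun k _ ↦ ?_)
          rw [norm_mul, Complex.norm_real, Real.norm_of_nonneg (hA i k)]
      _ ≤ ∑ k, A i k * (c * x k) :=
          Finset.sum_le_sum fun k _ ↦ mul_le_mul_of_nonneg_left (hbound k) (hA i k)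
      _ = c * (A *ᵥ x) i := by
          simp only [mulVec, dotProduct, Finset.mul_sum]
          exact Finset.sum_congr rfl fun k _ ↦ by ring
      _ ≤ c * (l * x i) :=
          mul_le_mul_of_nonneg_left (hAx i) (div_nonneg (norm_nonneg _) (hx i).le)
      _ = l * ‖v i‖ := by rw [← hci]; ring
  exact le_of_mul_le_mul_right key hvi

theorem mulVec_apply_lt_of_le_of_ne {A : Matrix ι ι ℝ} (hA : ∀ i j, 0 < A i j) {u w : ι → ℝ}
    (hle : u ≤ w) (hne : u ≠ w) (i : ι) : (A *ᵥ u) i < (A *ᵥ w) i := by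
  obtain ⟨j, hj⟩ := Pi.lt_def.mp (lt_of_le_of_ne hle hne) |>.2
  exact Finset.sum_lt_sum (fun k _ ↦ mul_le_mul_of_nonneg_left (hle k) (hA i k).le)
    ⟨j, Finset.mem_univ j, mul_lt_mul_of_pos_left hj (hA i j)⟩

end Matrix

theorem perronValue_eq_of_mulVec_eq_smul {n : ℕ} [Nonempty (Fin n)]
    {A : Matrix (Fin n) (Fin n) ℝ} (hA : ∀ i j, 0 ≤ A i j) {x : Fin n → ℝ} (hx : ∀ i, 0 < x i)
    {l : ℝ} (hAx : A *ᵥ x = l • x) : perronValue A = l := by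
  have hbound {μ : ℂ} (hμ : (A.map Complex.ofReal).charpoly.IsRoot μ) : ‖μ‖ ≤ l := by
    obtain ⟨v, hv, hAv⟩ := (isRoot_charpoly_iff_exists_mulVec_eq_smul _ _).mp hμ
    exact norm_eigenvalue_le_of_mulVec_le_smul hA hx hAx.le hv hAv
  have hroot : (A.map Complex.ofReal).charpoly.IsRoot l := by
    refine (isRoot_charpoly_iff_exists_mulVec_eq_smul _ _).mpr
      ⟨Complex.ofRealHom ∘ x, fun h ↦ ?_, funext fun i ↦ ?_⟩
    · obtain ⟨i⟩ := ‹Nonempty (Fin n)›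
      exact (hx i).ne' (by simpa using congrFun h i)
    · change (A.map Complex.ofRealHom *ᵥ (Complex.ofRealHom ∘ x)) i = _
      rw [← RingHom.map_mulVec, hAx]
      simp
  have hnorm : ‖(l : ℂ)‖ = l := by
    rw [Complex.norm_real, Real.norm_eq_abs]
    exact le_antisymm (by simpa using hbound hroot) (le_abs_self l)
  exact IsGreatest.csSup_eq ⟨⟨l, hroot, hnorm.symm⟩, by rintro _ ⟨μ, hμ, rfl⟩; exact hbound hμ⟩

theorem isPerronVector_of_mulVec_eq_smul {n : ℕ} [Nonempty (Fin n)]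
    {A : Matrix (Fin n) (Fin n) ℝ} (hA : ∀ i j, 0 ≤ A i j) {x : Fin n → ℝ} (hx : ∀ i, 0 < x i)
    {l : ℝ} (hAx : A *ᵥ x = l • x) : IsPerronVector A x := by
  refine ⟨fun h ↦ ?_, by rw [perronValue_eq_of_mulVec_eq_smul hA hx hAx, hAx]⟩
  obtain ⟨i⟩ := ‹Nonempty (Fin n)›
  exact (hx i).ne' (congrFun h i)

section Ratios

variable {ι : Type*} [Finite ι] {x y : ι → ℝ}

theorem le_ciSup_div_smul (hx : ∀ i, 0 < x i) : y ≤ (⨆ i, y i / x i) • x := fun j ↦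
  (div_le_iff₀ (hx j)).mp (le_ciSup (f := fun i ↦ y i / x i) (Set.finite_range _).bddAbove j)

theorem ciInf_div_smul_le (hx : ∀ i, 0 < x i) : (⨅ i, y i / x i) • x ≤ y := fun j ↦
  (le_div_iff₀ (hx j)).mp (ciInf_le (f := fun i ↦ y i / x i) (Set.finite_range _).bddBelow j)

variable [Nonempty ι]

theorem ciSup_div_lt {r : ℝ} (hx : ∀ i, 0 < x i) (h : ∀ i, y i < r * x i) :
    ⨆ i, y i / x i < r := by
  obtain ⟨i, hi⟩ := exists_eq_ciSup_of_finite (f := fun i ↦ y i / x i)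
  exact hi ▸ (div_lt_iff₀ (hx i)).mpr (h i)

theorem lt_ciInf_div {r : ℝ} (hx : ∀ i, 0 < x i) (h : ∀ i, r * x i < y i) :
    r < ⨅ i, y i / x i := by
  obtain ⟨i, hi⟩ := exists_eq_ciInf_of_finite (f := fun i ↦ y i / x i)
  exact hi ▸ (lt_div_iff₀ (hx i)).mpr (h i)

end Ratios

/-- Let `A` be an `n × n` entrywise positive real matrix and `x` entrywise
positive. If `x` is not a Perron vector of `A`, then
`max_i (A²x)_i/(Ax)_i < max_i (Ax)_i/x_i` and `min_i (Ax)_i/x_i < min_i (A²x)_i/(Ax)_i`. -/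
theorem ratio_strict_monotone_of_positive_matrix {n : ℕ} (hn : 0 < n)
    (A : Matrix (Fin n) (Fin n) ℝ) (x : Fin n → ℝ)
    (hA : ∀ i j, 0 < A i j) (hx : ∀ i, 0 < x i)
    (hnp : ¬ IsPerronVector A x) :
    (⨆ i, A.mulVec (A.mulVec x) i / A.mulVec x i) < (⨆ i, A.mulVec x i / x i) ∧
    (⨅ i, A.mulVec x i / x i) < ⨅ i, A.mulVec (A.mulVec x) i / A.mulVec x i := by
  have : Nonempty (Fin n) := ⟨⟨0, hn⟩⟩
  have hne (l : ℝ) : A *ᵥ x ≠ l • x := fun h ↦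
    hnp (isPerronVector_of_mulVec_eq_smul (fun i j ↦ (hA i j).le) hx h)
  have hx0 : 0 ≠ x := fun h ↦ (hx ⟨0, hn⟩).ne (congrFun h _)
  have hAx (i : Fin n) : 0 < (A *ᵥ x) i := by
    simpa using mulVec_apply_lt_of_le_of_ne hA (u := 0) (fun j ↦ (hx j).le) hx0 i
  constructor
  · refine ciSup_div_lt hAx fun i ↦ ?_
    simpa [mulVec_smul] using
      mulVec_apply_lt_of_le_of_ne hA (le_ciSup_div_smul hx) (hne _) i
  · refine lt_ciInf_div hAx fun i ↦ ?_
    simpa [mulVec_smul] using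
      mulVec_apply_lt_of_le_of_ne hA (ciInf_div_smul_le hx) (hne _).symm i
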